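/- arXiv:2407.14109 — 2 statements merged into one kernel-verified Lean document; each statement's English description precedes it below -/
import Mathlib

section
/- Let H_Λ be the finite-volume Hamiltonian on ℓ²(Λ; ℂ²) and let P({E}) be the spectral projection onto the eigenspace of H_Λ with eigenvalue E ≠ Ω. Then for all x, y ∈ Λ, the 2×2 matrix π_y P({E}) π_x† equals ⟨e_{1,y}, P({E}) e_{1,x}⟩ times the matrix with rows (1, g√ρ(x)/(E-Ω)) and (g√ρ(y)/(E-Ω), g²√(ρ(y)ρ(x))/(E-Ω)²). -/
noncomputable section

variable (d : ℕ)

/-- The finite-volume photon–atom Hamiltonian as a matrix on `ℓ²(Λ;ℝ²)`: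
`H_Λ(φ,ψ) = (T_Λφ + g√ρ ψ, g√ρ φ + Ωψ)`. -/
def hamMat (Λ : Finset (Fin d → ℤ)) (T : (Fin d → ℤ) → (Fin d → ℤ) → ℝ)
    (ρ : (Fin d → ℤ) → ℝ) (g Ω : ℝ) :
    Matrix ({a // a ∈ Λ} × Fin 2) ({a // a ∈ Λ} × Fin 2) ℝ :=
  Matrix.of fun p q =>
    if p.2 = 0 then
      (if q.2 = 0 then T p.1 q.1
       else if p.1 = q.1 then g * Real.sqrt (ρ p.1) else 0)
    else
      (if q.2 = 0 then (if p.1 = q.1 then g * Real.sqrt (ρ p.1) else 0)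
       else if p.1 = q.1 then Ω else 0)

/-- The orthogonal projection onto the `E`-eigenspace of `H_Λ`, as an operator. -/
def eigProj (Λ : Finset (Fin d → ℤ)) (T : (Fin d → ℤ) → (Fin d → ℤ) → ℝ)
    (ρ : (Fin d → ℤ) → ℝ) (g Ω E : ℝ) :
    EuclideanSpace ℝ ({a // a ∈ Λ} × Fin 2) →L[ℝ]
      EuclideanSpace ℝ ({a // a ∈ Λ} × Fin 2) :=
  letI K := Module.End.eigenspace (Matrix.toEuclideanLin (hamMat d Λ T ρ g Ω)) E
  K.subtypeL.comp (Submodule.orthogonalProjection K)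

/-- `e_{j,x}` basis vectors. -/
def basE (Λ : Finset (Fin d → ℤ)) (j : Fin 2) (x : {a // a ∈ Λ}) :
    EuclideanSpace ℝ ({a // a ∈ Λ} × Fin 2) :=
  EuclideanSpace.single (x, j) 1

/-! On the `E`-eigenspace the second row of `H_Λ v = E v` reads
`g √ρ(z) v(z,0) + Ω v(z,1) = E v(z,1)`, so for `E ≠ Ω` the photon component of an eigenvector is
`g √ρ(z) / (E - Ω)` times its atom component. Applied to `P e_{j,x}` this fixes the row index
of `⟨e_{i,y}, P e_{j,x}⟩`, and applied after the symmetry `⟨P u, w⟩ = ⟨u, P w⟩` it fixes the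
column index. -/

section EigenProjection

variable {d} {Λ : Finset (Fin d → ℤ)} {T : (Fin d → ℤ) → (Fin d → ℤ) → ℝ}
  {ρ : (Fin d → ℤ) → ℝ} {g Ω E : ℝ}

theorem inner_basE (j : Fin 2) (x : {a // a ∈ Λ}) (w : EuclideanSpace ℝ ({a // a ∈ Λ} × Fin 2)) :
    inner ℝ (basE d Λ j x) w = w (x, j) := by
  simp [basE, EuclideanSpace.inner_single_left]

theorem hamMat_mulVec_apply_one (v : {a // a ∈ Λ} × Fin 2 → ℝ) (z : {a // a ∈ Λ}) :
    (hamMat d Λ T ρ g Ω).mulVec v (z, 1) = g * √(ρ z) * v (z, 0) + Ω * v (z, 1) := by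
  simp [Matrix.mulVec, dotProduct, hamMat, Fintype.sum_prod_type, ite_mul,
    Finset.sum_add_distrib]

theorem apply_one_eq_of_mem_eigenspace (hE : E ≠ Ω) {v : EuclideanSpace ℝ ({a // a ∈ Λ} × Fin 2)}
    (hv : v ∈ Module.End.eigenspace (Matrix.toEuclideanLin (hamMat d Λ T ρ g Ω)) E)
    (z : {a // a ∈ Λ}) :
    v (z, 1) = g * √(ρ z) / (E - Ω) * v (z, 0) := by
  have hrow : g * √(ρ z) * v (z, 0) + Ω * v (z, 1) = E * v (z, 1) := by
    rw [← hamMat_mulVec_apply_one]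
    exact congrFun (congrArg WithLp.ofLp (Module.End.mem_eigenspace_iff.mp hv)) (z, 1)
  rw [div_mul_eq_mul_div, eq_div_iff (sub_ne_zero.mpr hE)]
  linarith

theorem eigProj_eq_starProjection :
    eigProj d Λ T ρ g Ω E =
      (Module.End.eigenspace (Matrix.toEuclideanLin (hamMat d Λ T ρ g Ω)) E).starProjection :=
  rfl

theorem inner_eigProj_left (u w : EuclideanSpace ℝ ({a // a ∈ Λ} × Fin 2)) :
    inner ℝ (eigProj d Λ T ρ g Ω E u) w = inner ℝ u (eigProj d Λ T ρ g Ω E w) := by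
  rw [eigProj_eq_starProjection]
  exact Submodule.inner_starProjection_left_eq_right _ u w

theorem inner_basE_one_eigProj (hE : E ≠ Ω) (y : {a // a ∈ Λ})
    (u : EuclideanSpace ℝ ({a // a ∈ Λ} × Fin 2)) :
    inner ℝ (basE d Λ 1 y) (eigProj d Λ T ρ g Ω E u)
      = g * √(ρ y) / (E - Ω) * inner ℝ (basE d Λ 0 y) (eigProj d Λ T ρ g Ω E u) := by
  rw [inner_basE, inner_basE, eigProj_eq_starProjection]
  exact apply_one_eq_of_mem_eigenspace hE (Submodule.starProjection_apply_mem _ u) y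

theorem inner_eigProj_basE_one (hE : E ≠ Ω) (x : {a // a ∈ Λ})
    (u : EuclideanSpace ℝ ({a // a ∈ Λ} × Fin 2)) :
    inner ℝ u (eigProj d Λ T ρ g Ω E (basE d Λ 1 x))
      = g * √(ρ x) / (E - Ω) * inner ℝ u (eigProj d Λ T ρ g Ω E (basE d Λ 0 x)) := by
  rw [← inner_eigProj_left, ← inner_eigProj_left, real_inner_comm (basE d Λ 1 x),
    real_inner_comm (basE d Λ 0 x), inner_basE_one_eigProj hE]

end EigenProjection

theorem stmt9 (Λ : Finset (Fin d → ℤ)) (T : (Fin d → ℤ) → (Fin d → ℤ) → ℝ)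
    (ρ : (Fin d → ℤ) → ℝ) (hρ : ∀ a, 0 ≤ ρ a)
    (g Ω E : ℝ) (hE : E ≠ Ω)
    (x y : {a // a ∈ Λ}) :
    let P := eigProj d Λ T ρ g Ω E
    let φ := inner (𝕜 := ℝ) (basE d Λ 0 y) (P (basE d Λ 0 x))
    inner (𝕜 := ℝ) (basE d Λ 0 y) (P (basE d Λ 1 x))
        = g * Real.sqrt (ρ x) / (E - Ω) * φ ∧
    inner (𝕜 := ℝ) (basE d Λ 1 y) (P (basE d Λ 0 x))
        = g * Real.sqrt (ρ y) / (E - Ω) * φ ∧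
    inner (𝕜 := ℝ) (basE d Λ 1 y) (P (basE d Λ 1 x))
        = g ^ 2 * Real.sqrt (ρ y * ρ x) / (E - Ω) ^ 2 * φ := by
  refine ⟨inner_eigProj_basE_one hE x _, inner_basE_one_eigProj hE y _, ?_⟩
  rw [inner_basE_one_eigProj hE, inner_eigProj_basE_one hE, Real.sqrt_mul (hρ y)]
  field_simp [sub_ne_zero.mpr hE]
end
end

section
/- With notation as in the rank-one modification setup, a real number E ≠ Ω outside σ(K̂_x(E)) is an eigenvalue of H_Λ with φ_E(x,x) ≠ 0 if and only if Γ_x(E) = (g²ρ(x) - g²ρ̂_x)/(E - Ω), where Γ_x(E) = -⟨δ_x, (K̂_x(E) - E)^{-1} δ_x⟩^{-1}. -/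
noncomputable section

variable (d : ℕ)

/-- The rank-one modification `K̂_x(E)` of the reduced operator
`K_Λ(E) = T_Λ + (g²/(E-Ω))ρ`, in which `ρ(x)` is replaced by `ρ̂`. -/
def KhatMat (Λ : Finset (Fin d → ℤ)) (T : (Fin d → ℤ) → (Fin d → ℤ) → ℝ)
    (ρ : (Fin d → ℤ) → ℝ) (g Ω : ℝ) (x : {a // a ∈ Λ}) (ρhat E : ℝ) :
    Matrix {a // a ∈ Λ} {a // a ∈ Λ} ℝ :=
  Matrix.of fun a b =>
    T a b + if a = b then g ^ 2 / (E - Ω) * (if a = x then ρhat else ρ a) else 0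

/-- The modified Green's function `Ĝ(y,x,E) = ⟨δ_y, (K̂_x(E) - E)^{-1} δ_x⟩`. -/
def Ghat (Λ : Finset (Fin d → ℤ)) (T : (Fin d → ℤ) → (Fin d → ℤ) → ℝ)
    (ρ : (Fin d → ℤ) → ℝ) (g Ω : ℝ) (x : {a // a ∈ Λ}) (ρhat E : ℝ)
    (y x' : {a // a ∈ Λ}) : ℝ :=
  (KhatMat d Λ T ρ g Ω x ρhat E - E • (1 : Matrix {a // a ∈ Λ} {a // a ∈ Λ} ℝ))⁻¹ y x'

/-!
Since `E ≠ Ω`, the second component of an eigenvector `(φ, ψ)` of `H_Λ` is forced to be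
`ψ = g√ρ φ / (E - Ω)`, and eliminating it turns `H_Λ v = E v` into `(K_Λ(E) - E) φ = 0`.
Now `K_Λ(E) - E = A + c δ_x δ_xᵀ` with `A = K̂_x(E) - E` invertible and
`c = g²(ρ(x) - ρ̂) / (E - Ω) ≠ 0`. A null vector `φ` of `A + c δ_x δ_xᵀ` satisfies
`φ = -c φ(x) A⁻¹ δ_x`, so one with `φ(x) ≠ 0` exists iff `1 + c ⟨δ_x, A⁻¹ δ_x⟩ = 0`, i.e. iff
`Γ_x(E) = c`. Finally `φ_E(x,x) = ‖P({E}) e_{1,x}‖²` is nonzero iff some eigenvector for `E`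
has a nonzero `(x,0)`-component.
-/

open Matrix

theorem Submodule.inner_starProjection_self_ne_zero_iff {𝕜 E : Type*} [RCLike 𝕜]
    [NormedAddCommGroup E] [InnerProductSpace 𝕜 E] (K : Submodule 𝕜 E)
    [K.HasOrthogonalProjection] (e : E) :
    inner 𝕜 e (K.starProjection e) ≠ 0 ↔ ∃ v ∈ K, inner 𝕜 e v ≠ 0 := by
  have hPe :
      inner 𝕜 (K.starProjection e) (K.starProjection e) = inner 𝕜 e (K.starProjection e) := by
    rw [K.inner_starProjection_left_eq_right,
      K.starProjection_eq_self_iff.mpr (K.starProjection_apply_mem e)]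
  rw [← hPe, inner_self_ne_zero, Ne, K.starProjection_apply_eq_zero_iff, K.mem_orthogonal']
  push Not
  rfl

theorem Module.End.hasEigenvalue_and_inner_starProjection_eigenspace_ne_zero_iff
    {𝕜 E : Type*} [RCLike 𝕜] [NormedAddCommGroup E] [InnerProductSpace 𝕜 E]
    [FiniteDimensional 𝕜 E] (f : Module.End 𝕜 E) (μ : 𝕜) (e : E) :
    (f.HasEigenvalue μ ∧ inner 𝕜 e ((f.eigenspace μ).starProjection e) ≠ 0) ↔
      ∃ v, f v = μ • v ∧ inner 𝕜 e v ≠ 0 := by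
  simp_rw [Submodule.inner_starProjection_self_ne_zero_iff, Module.End.mem_eigenspace_iff]
  refine ⟨And.right, fun ⟨v, hv, he⟩ => ⟨?_, v, hv, he⟩⟩
  refine Module.End.hasEigenvalue_of_hasEigenvector ⟨Module.End.mem_eigenspace_iff.mpr hv, ?_⟩
  rintro rfl
  exact he (inner_zero_right e)

theorem Matrix.hasEigenvalue_toEuclideanLin_and_inner_starProjection_single_ne_zero_iff
    {𝕜 n : Type*} [RCLike 𝕜] [Fintype n] [DecidableEq n] (M : Matrix n n 𝕜) (μ : 𝕜) (i : n) :
    letI e := EuclideanSpace.single i (1 : 𝕜)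
    (Module.End.HasEigenvalue (toEuclideanLin M) μ ∧
        inner 𝕜 e ((Module.End.eigenspace (toEuclideanLin M) μ).starProjection e) ≠ 0) ↔
      ∃ v, M *ᵥ v = μ • v ∧ v i ≠ 0 := by
  rw [Module.End.hasEigenvalue_and_inner_starProjection_eigenspace_ne_zero_iff]
  refine (WithLp.equiv 2 (n → 𝕜)).exists_congr fun v => ?_
  rw [toLpLin_apply, ← (WithLp.ofLp_injective 2).eq_iff, EuclideanSpace.inner_single_left]
  simp

theorem Matrix.exists_add_single_mulVec_eq_zero_iff {K n : Type*} [Field K] [Fintype n]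
    [DecidableEq n] {A : Matrix n n K} (hA : IsUnit A) {c : K} (hc : c ≠ 0) (i : n) :
    (∃ φ, (A + Matrix.single i i c) *ᵥ φ = 0 ∧ φ i ≠ 0) ↔ -(A⁻¹ i i)⁻¹ = c := by
  have hdet : IsUnit A.det := (isUnit_iff_isUnit_det A).mp hA
  have hsolve : ∀ φ w, A *ᵥ φ = w ↔ φ = A⁻¹ *ᵥ w := fun φ w => by
    constructor
    · rintro rfl; rw [mulVec_mulVec, nonsing_inv_mul A hdet, one_mulVec]
    · rintro rfl; rw [mulVec_mulVec, mul_nonsing_inv A hdet, one_mulVec]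
  have hkey : -(A⁻¹ i i)⁻¹ = c ↔ 1 + c * A⁻¹ i i = 0 := by
    constructor
    · rintro rfl
      have hG : A⁻¹ i i ≠ 0 := by rintro hG; simp [hG] at hc
      field_simp
      ring
    · intro h
      have hG : A⁻¹ i i ≠ 0 := by rintro hG; simp [hG] at h
      field_simp
      linear_combination -h
  simp_rw [add_mulVec, single_mulVec_eq, add_eq_zero_iff_eq_neg, ← neg_smul, hsolve,
    mulVec_smul, mulVec_single_one, hkey]
  constructor
  · rintro ⟨φ, hφ, hφi⟩
    have hi := congrFun hφ i
    simp only [Pi.smul_apply, col_apply, smul_eq_mul] at hi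
    have hfactor : φ i * (1 + c * A⁻¹ i i) = 0 := by linear_combination hi
    exact (mul_eq_zero.mp hfactor).resolve_left hφi
  · intro h
    refine ⟨A⁻¹.col i, ?_, ?_⟩
    · ext j
      change A⁻¹ j i = -(c * A⁻¹ i i) * A⁻¹ j i
      linear_combination (A⁻¹ j i) * h
    · rintro (hG : A⁻¹ i i = 0)
      simp [hG] at h

/-- The reduced operator `K_Λ(E)`. -/
def KMat (Λ : Finset (Fin d → ℤ)) (T : (Fin d → ℤ) → (Fin d → ℤ) → ℝ)
    (ρ : (Fin d → ℤ) → ℝ) (g Ω E : ℝ) : Matrix {a // a ∈ Λ} {a // a ∈ Λ} ℝ :=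
  Matrix.of fun a b => T a b + if a = b then g ^ 2 / (E - Ω) * ρ a else 0

section

variable {d} {Λ : Finset (Fin d → ℤ)} {T : (Fin d → ℤ) → (Fin d → ℤ) → ℝ}
  {ρ : (Fin d → ℤ) → ℝ} {g Ω E : ℝ}

theorem KMat_eq_KhatMat_add_single (x : {a // a ∈ Λ}) (ρhat : ℝ) :
    KMat d Λ T ρ g Ω E =
      KhatMat d Λ T ρ g Ω x ρhat E +
        Matrix.single x x ((g ^ 2 * ρ x - g ^ 2 * ρhat) / (E - Ω)) := by
  ext a b
  rcases eq_or_ne a b with rfl | hab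
  · rcases eq_or_ne a x with rfl | hax
    · simp [KMat, KhatMat]
      ring
    · simp [KMat, KhatMat, hax, Matrix.single_apply_of_row_ne hax.symm]
  · simp only [KMat, KhatMat, Matrix.add_apply, of_apply, if_neg hab, add_zero, left_eq_add]
    rw [Matrix.single_apply, if_neg]
    rintro ⟨rfl, rfl⟩
    exact hab rfl

theorem hamMat_mulVec_fst (w : {a // a ∈ Λ} × Fin 2 → ℝ) (a : {a // a ∈ Λ}) :
    (hamMat d Λ T ρ g Ω *ᵥ w) (a, 0) =
      ∑ b : {a // a ∈ Λ}, T a b * w (b, 0) + g * √(ρ a) * w (a, 1) := by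
  simp [hamMat, mulVec, dotProduct, Fintype.sum_prod_type, Finset.sum_add_distrib]

theorem hamMat_mulVec_snd (w : {a // a ∈ Λ} × Fin 2 → ℝ) (a : {a // a ∈ Λ}) :
    (hamMat d Λ T ρ g Ω *ᵥ w) (a, 1) = g * √(ρ a) * w (a, 0) + Ω * w (a, 1) := by
  simp [hamMat, mulVec, dotProduct, Fintype.sum_prod_type, Finset.sum_add_distrib]

theorem KMat_sub_smul_one_mulVec (φ : {a // a ∈ Λ} → ℝ) (a : {a // a ∈ Λ}) :
    ((KMat d Λ T ρ g Ω E - E • 1) *ᵥ φ) a =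
      ∑ b : {a // a ∈ Λ}, T a b * φ b + g ^ 2 / (E - Ω) * ρ a * φ a - E * φ a := by
  simp [KMat, mulVec, dotProduct, sub_mul, add_mul, Finset.sum_add_distrib, one_apply]

theorem hamMat_mulVec_eq_smul_iff (hρ : ∀ a, 0 ≤ ρ a) (hE : E ≠ Ω)
    (v : {a // a ∈ Λ} × Fin 2 → ℝ) :
    hamMat d Λ T ρ g Ω *ᵥ v = E • v ↔
      (∀ a, v (a, 1) = g * √(ρ a) * v (a, 0) / (E - Ω)) ∧
        (KMat d Λ T ρ g Ω E - E • 1) *ᵥ (fun a => v (a, 0)) = 0 := by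
  have hEΩ : E - Ω ≠ 0 := sub_ne_zero.mpr hE
  have hsnd : ∀ a, (hamMat d Λ T ρ g Ω *ᵥ v) (a, 1) = E * v (a, 1) ↔
      v (a, 1) = g * √(ρ a) * v (a, 0) / (E - Ω) := fun a => by
    rw [hamMat_mulVec_snd, eq_div_iff hEΩ]
    constructor <;> intro h <;> linarith
  have hfst : ∀ a, v (a, 1) = g * √(ρ a) * v (a, 0) / (E - Ω) →
      ((hamMat d Λ T ρ g Ω *ᵥ v) (a, 0) = E * v (a, 0) ↔
        ((KMat d Λ T ρ g Ω E - E • 1) *ᵥ (fun a => v (a, 0))) a = 0) := fun a ha => by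
    have hsq : √(ρ a) * √(ρ a) = ρ a := Real.mul_self_sqrt (hρ a)
    rw [hamMat_mulVec_fst, KMat_sub_smul_one_mulVec, ha]
    constructor <;> intro h
    · linear_combination h - g ^ 2 * v (a, 0) / (E - Ω) * hsq
    · linear_combination h + g ^ 2 * v (a, 0) / (E - Ω) * hsq
  simp only [funext_iff, Prod.forall, Fin.forall_fin_two, Pi.smul_apply, smul_eq_mul,
    Pi.zero_apply]
  constructor
  · intro h
    have h1 := fun a => (hsnd a).1 (h a).2
    exact ⟨h1, fun a => (hfst a (h1 a)).1 (h a).1⟩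
  · rintro ⟨h1, h0⟩ a
    exact ⟨(hfst a (h1 a)).2 (h0 a), (hsnd a).2 (h1 a)⟩

theorem exists_hamMat_eigenvector_iff (hρ : ∀ a, 0 ≤ ρ a) (hE : E ≠ Ω) (x : {a // a ∈ Λ}) :
    (∃ v, hamMat d Λ T ρ g Ω *ᵥ v = E • v ∧ v (x, 0) ≠ 0) ↔
      ∃ φ, (KMat d Λ T ρ g Ω E - E • 1) *ᵥ φ = 0 ∧ φ x ≠ 0 := by
  simp_rw [hamMat_mulVec_eq_smul_iff hρ hE]
  constructor
  · rintro ⟨v, ⟨-, hv⟩, hvx⟩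
    exact ⟨_, hv, hvx⟩
  · rintro ⟨φ, hφ, hφx⟩
    refine ⟨fun p => if p.2 = 0 then φ p.1 else g * √(ρ p.1) * φ p.1 / (E - Ω),
      ⟨fun a => by simp, by simpa using hφ⟩, by simpa using hφx⟩

end

theorem stmt15 (Λ : Finset (Fin d → ℤ)) (T : (Fin d → ℤ) → (Fin d → ℤ) → ℝ)
    (ρ : (Fin d → ℤ) → ℝ) (hρ : ∀ a, 0 ≤ ρ a)
    (g Ω E : ℝ) (hg : 0 < g) (hE : E ≠ Ω)
    (x : {a // a ∈ Λ}) (ρhat : ℝ) (hρhat : ρ x ≠ ρhat)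
    (hinv : IsUnit (KhatMat d Λ T ρ g Ω x ρhat E
      - E • (1 : Matrix {a // a ∈ Λ} {a // a ∈ Λ} ℝ))) :
    let φxx := inner (𝕜 := ℝ) (basE d Λ 0 x)
      (eigProj d Λ T ρ g Ω E (basE d Λ 0 x))
    let Γ := -(Ghat d Λ T ρ g Ω x ρhat E x x)⁻¹
    (Module.End.HasEigenvalue (Matrix.toEuclideanLin (hamMat d Λ T ρ g Ω)) E
        ∧ φxx ≠ 0) ↔
      Γ = (g ^ 2 * ρ x - g ^ 2 * ρhat) / (E - Ω) := by
  intro φxx Γ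
  have hc : (g ^ 2 * ρ x - g ^ 2 * ρhat) / (E - Ω) ≠ 0 := by
    rw [← mul_sub]
    exact div_ne_zero (mul_ne_zero (pow_ne_zero 2 hg.ne') (sub_ne_zero.mpr hρhat))
      (sub_ne_zero.mpr hE)
  have hred : KMat d Λ T ρ g Ω E - E • 1 = (KhatMat d Λ T ρ g Ω x ρhat E - E • 1) +
      Matrix.single x x ((g ^ 2 * ρ x - g ^ 2 * ρhat) / (E - Ω)) := by
    rw [KMat_eq_KhatMat_add_single x ρhat]
    abel
  calc _ ↔ ∃ v, hamMat d Λ T ρ g Ω *ᵥ v = E • v ∧ v (x, 0) ≠ 0 :=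
        hasEigenvalue_toEuclideanLin_and_inner_starProjection_single_ne_zero_iff _ _ _
    _ ↔ ∃ φ, (KMat d Λ T ρ g Ω E - E • 1) *ᵥ φ = 0 ∧ φ x ≠ 0 :=
        exists_hamMat_eigenvector_iff hρ hE x
    _ ↔ _ := by
        rw [hred]
        exact exists_add_single_mulVec_eq_zero_iff hinv hc x
end
end
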